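/- Suppose p > 0 satisfies the optimal-price condition p·φ((θ−p)/σ) = σ·Φ((θ−p)/σ). Let r̂ : ℝ → [0,p] be bounded, measurable and nondecreasing, and let c ∈ ℝ satisfy the indifference equation c + E[r̂ ∥ c] = p. Then the reward program is not profitable: Π(p, r̂, c) ≤ p·Φ((θ−p)/σ), the expected profit of the no-reward case at the optimal price. -/

import Mathlib

noncomputable section

open MeasureTheory Real Set Filter

/-- standard normal pdf φ -/
def stdPdf (x : ℝ) : ℝ := (Real.sqrt (2 * Real.pi))⁻¹ * Real.exp (-(x ^ 2) / 2)

/-- standard normal cdf Φ -/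
def stdCdf (x : ℝ) : ℝ := ∫ t in Set.Iic x, stdPdf t

/-- posterior expected reward  E[r ‖ x] = ∫ r(v) φ((v-μ_x)/σ_v)/σ_v dv, where
    μ_x = τ x + (1-τ) θ, τ = σθ²/(σε²+σθ²), σ_v = σε σθ / √(σε²+σθ²). -/
def postReward (θ σε σθ : ℝ) (r : ℝ → ℝ) (x : ℝ) : ℝ :=
  ∫ v, r v * stdPdf ((v - (σθ ^ 2 / (σε ^ 2 + σθ ^ 2) * x +
      (1 - σθ ^ 2 / (σε ^ 2 + σθ ^ 2)) * θ)) / (σε * σθ / Real.sqrt (σε ^ 2 + σθ ^ 2))) /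
    (σε * σθ / Real.sqrt (σε ^ 2 + σθ ^ 2))

/-- expected profit  Π(p, r, c) = ∫ (p - r(v)) Φ((v-c)/σε) φ((θ-v)/σθ)/σθ dv. -/
def profit (θ σε σθ : ℝ) (p : ℝ) (r : ℝ → ℝ) (c : ℝ) : ℝ :=
  ∫ v, (p - r v) * stdCdf ((v - c) / σε) * stdPdf ((θ - v) / σθ) / σθ

lemma stdPdf_pos (x : ℝ) : 0 < stdPdf x := by
  unfold stdPdf
  positivity

lemma stdPdf_nonneg (x : ℝ) : 0 ≤ stdPdf x := (stdPdf_pos x).le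

lemma stdPdf_even (x : ℝ) : stdPdf (-x) = stdPdf x := by
  unfold stdPdf; ring_nf

lemma continuous_stdPdf : Continuous stdPdf := by
  unfold stdPdf
  continuity

lemma integrable_stdPdf : Integrable stdPdf := by
  unfold stdPdf
  have h : Integrable (fun x : ℝ => Real.exp (-(2⁻¹ : ℝ) * x ^ 2)) :=
    integrable_exp_neg_mul_sq (by norm_num)
  have := h.const_mul (Real.sqrt (2 * Real.pi))⁻¹
  refine this.congr ?_
  filter_upwards with x
  ring_nf

lemma integral_stdPdf : ∫ x, stdPdf x = 1 := by
  unfold stdPdf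
  rw [MeasureTheory.integral_const_mul]
  have : ∀ x : ℝ, Real.exp (-(x ^ 2) / 2) = Real.exp (-(2⁻¹ : ℝ) * x ^ 2) := by
    intro x; ring_nf
  simp_rw [this, integral_gaussian]
  rw [show (π / (2⁻¹:ℝ)) = 2 * π by ring]
  rw [inv_mul_cancel₀ (by positivity)]

lemma stdCdf_nonneg (x : ℝ) : 0 ≤ stdCdf x :=
  MeasureTheory.setIntegral_nonneg measurableSet_Iic (fun t _ => stdPdf_nonneg t)

lemma stdCdf_mono : Monotone stdCdf := by
  intro a b hab
  exact MeasureTheory.setIntegral_mono_set integrable_stdPdf.integrableOn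
    (Filter.Eventually.of_forall (fun t => stdPdf_nonneg t))
    (HasSubset.Subset.eventuallyLE (Iic_subset_Iic.mpr hab))

lemma measurable_stdCdf : Measurable stdCdf := stdCdf_mono.measurable

lemma stdCdf_le_one (x : ℝ) : stdCdf x ≤ 1 := by
  rw [← integral_stdPdf]
  exact MeasureTheory.setIntegral_le_integral integrable_stdPdf
    (Filter.Eventually.of_forall (fun t => stdPdf_nonneg t))

lemma integral_Ioi_stdPdf (u : ℝ) : ∫ x in Ioi u, stdPdf x = stdCdf (-u) := by
  rw [stdCdf]
  have : ∫ x in Iic (-u), stdPdf x = ∫ x in Iic (-u), stdPdf (-x) := by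
    refine setIntegral_congr_fun measurableSet_Iic (fun t _ => ?_)
    rw [stdPdf_even]
  rw [this, integral_comp_neg_Iic, neg_neg]

lemma stdCdf_add_Ioi (u : ℝ) : stdCdf u + ∫ x in Ioi u, stdPdf x = 1 := by
  rw [stdCdf, ← integral_stdPdf]
  rw [← MeasureTheory.setIntegral_union (Iic_disjoint_Ioi le_rfl) measurableSet_Ioi
    integrable_stdPdf.integrableOn integrable_stdPdf.integrableOn, Iic_union_Ioi,
    MeasureTheory.setIntegral_univ]

/-- translation for Ioi set integrals -/
lemma integral_comp_sub_right_Ioi (f : ℝ → ℝ) (a c : ℝ) :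
    ∫ x in Ioi c, f (x - a) = ∫ x in Ioi (c - a), f x := by
  have A : MeasurableEmbedding fun x : ℝ => x + -a :=
    (Homeomorph.addRight (-a)).isClosedEmbedding.measurableEmbedding
  have hmap : Measure.map (fun x : ℝ => x + -a) volume = volume :=
    map_add_right_eq_self volume (-a)
  have h := A.setIntegral_map (μ := volume) f (Ioi (c - a))
  rw [hmap] at h
  have hpre : (fun x : ℝ => x + -a) ⁻¹' Ioi (c - a) = Ioi c := by
    ext x
    simp only [mem_preimage, mem_Ioi]
    constructor <;> intro <;> linarith
  rw [hpre] at h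
  simp_rw [sub_eq_add_neg]
  exact h.symm

lemma integrable_pdfS (m s : ℝ) (hs : 0 < s) :
    Integrable (fun x => stdPdf ((x - m) / s) / s) := by
  have h1 : Integrable (fun x : ℝ => stdPdf (x / s)) :=
    (integrable_comp_div_iff stdPdf hs.ne').mpr integrable_stdPdf
  exact (h1.comp_sub_right m).div_const s

/-- Gaussian pdf with mean m, sd s integrates to 1. -/
lemma integral_pdfS (m s : ℝ) (hs : 0 < s) : ∫ x, stdPdf ((x - m) / s) / s = 1 := by
  simp_rw [sub_eq_add_neg]
  rw [integral_add_right_eq_self (fun y : ℝ => stdPdf (y / s) / s) (-m)]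
  rw [MeasureTheory.Measure.integral_comp_div (fun y : ℝ => stdPdf y / s) s]
  simp_rw [div_eq_mul_inv (stdPdf _) s]
  rw [MeasureTheory.integral_mul_const, integral_stdPdf, smul_eq_mul, abs_of_pos hs]
  field_simp

lemma setIntegral_pdfS (m s : ℝ) (hs : 0 < s) (c : ℝ) :
    ∫ x in Ici c, stdPdf ((x - m) / s) / s = stdCdf ((m - c) / s) := by
  rw [MeasureTheory.integral_Ici_eq_integral_Ioi]
  simp_rw [div_eq_mul_inv (stdPdf _) s]
  rw [MeasureTheory.integral_mul_const]
  have h2 : ∫ x in Ioi c, stdPdf ((x - m) * s⁻¹) =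
      ∫ x in Ioi (c - m), stdPdf (x * s⁻¹) := by
    exact integral_comp_sub_right_Ioi (fun y => stdPdf (y * s⁻¹)) m c
  simp_rw [div_eq_mul_inv (_ - m) s]
  rw [h2, integral_comp_mul_right_Ioi stdPdf _ (inv_pos.mpr hs)]
  simp only [smul_eq_mul, inv_inv]
  rw [integral_Ioi_stdPdf]
  rw [show -((c - m) * s⁻¹) = (m - c)/s by field_simp; ring]
  rw [mul_comm s, mul_assoc, mul_inv_cancel₀ hs.ne', mul_one]

/-- full-line affine substitution for integrals against a scaled pdf -/
lemma integral_comp_affine (g : ℝ → ℝ) (m s : ℝ) (hs : 0 < s) :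
    ∫ v, g v * (stdPdf ((v - m) / s) / s) = ∫ t, g (m + s * t) * stdPdf t := by
  have h := MeasureTheory.Measure.integral_comp_mul_left
    (fun v => g (v + m) * (stdPdf (v / s) / s)) s
  -- h : ∫ x, g (s*x + m) * (stdPdf (s*x/s)/s) = |s⁻¹| • ∫ y, g (y+m) * (stdPdf (y/s)/s)
  have h2 : ∫ v, g v * (stdPdf ((v - m) / s) / s)
      = ∫ v, g (v + m) * (stdPdf (v / s) / s) := by
    rw [← integral_add_right_eq_self (fun v => g v * (stdPdf ((v - m) / s) / s)) m]
    simp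
  rw [h2]
  have h3 : ∀ x : ℝ, g (s * x + m) * (stdPdf (s * x / s) / s)
      = g (m + s * x) * stdPdf x / s := by
    intro x
    rw [mul_div_cancel_left₀ _ hs.ne', add_comm, mul_div_assoc]
  simp_rw [h3] at h
  rw [show |s⁻¹| = s⁻¹ by rw [abs_of_pos (inv_pos.mpr hs)]] at h
  have := congrArg (fun z => s * z) h
  simp only [smul_eq_mul] at this
  rw [← mul_assoc, mul_inv_cancel₀ hs.ne', one_mul] at this
  rw [← this]
  simp_rw [div_eq_mul_inv, MeasureTheory.integral_mul_const]
  field_simp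

lemma hasDerivAt_stdPdf (x : ℝ) : HasDerivAt stdPdf (-x * stdPdf x) x := by
  have h1 : HasDerivAt (fun y : ℝ => -(y ^ 2) / 2) (-x) x := by
    have := ((hasDerivAt_pow 2 x).neg).div_const 2
    exact this.congr_deriv (by norm_num; ring)
  have h2 := (h1.exp).const_mul (Real.sqrt (2 * Real.pi))⁻¹
  exact h2.congr_deriv (by unfold stdPdf; ring)

lemma stdCdf_eq_add_intervalIntegral (y : ℝ) :
    stdCdf y = stdCdf 0 + ∫ t in (0:ℝ)..y, stdPdf t := by
  have h := intervalIntegral.integral_Iic_sub_Iic (μ := volume) (f := stdPdf)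
    (a := (0:ℝ)) (b := y) integrable_stdPdf.integrableOn integrable_stdPdf.integrableOn
  unfold stdCdf
  rw [← h]
  ring

lemma hasDerivAt_stdCdf (x : ℝ) : HasDerivAt stdCdf (stdPdf x) x := by
  have hF : HasDerivAt (fun u => ∫ t in (0:ℝ)..u, stdPdf t) (stdPdf x) x :=
    intervalIntegral.integral_hasDerivAt_right
      (integrable_stdPdf.intervalIntegrable)
      (continuous_stdPdf.stronglyMeasurableAtFilter _ _)
      continuous_stdPdf.continuousAt
  have := (hF.const_add (stdCdf 0))
  have heq : (fun u => stdCdf 0 + ∫ t in (0:ℝ)..u, stdPdf t) = stdCdf := by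
    funext y
    exact (stdCdf_eq_add_intervalIntegral y).symm
  rwa [heq] at this

lemma continuous_stdCdf : Continuous stdCdf := by
  have : Differentiable ℝ stdCdf := fun x => (hasDerivAt_stdCdf x).differentiableAt
  exact this.continuous

/-- exponential tail bound for the cdf -/
lemma stdCdf_le_exp (u : ℝ) :
    stdCdf u ≤ (Real.sqrt (2 * Real.pi))⁻¹ * Real.exp (2⁻¹) * Real.exp u := by
  have hb : ∀ t : ℝ, stdPdf t ≤ (Real.sqrt (2 * Real.pi))⁻¹ * Real.exp (2⁻¹) * Real.exp t := by
    intro t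
    unfold stdPdf
    rw [mul_assoc, ← Real.exp_add]
    have h1 : -(t ^ 2) / 2 ≤ 2⁻¹ + t := by nlinarith [sq_nonneg (t + 1)]
    have := Real.exp_le_exp.mpr h1
    have hpos : (0:ℝ) < (Real.sqrt (2 * Real.pi))⁻¹ := by positivity
    exact mul_le_mul_of_nonneg_left this hpos.le
  calc stdCdf u = ∫ t in Iic u, stdPdf t := rfl
    _ ≤ ∫ t in Iic u, (Real.sqrt (2 * Real.pi))⁻¹ * Real.exp (2⁻¹) * Real.exp t := by
        refine MeasureTheory.setIntegral_mono_on integrable_stdPdf.integrableOn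
          (((integrableOn_exp_Iic u).const_mul _)) measurableSet_Iic (fun t _ => hb t)
    _ = (Real.sqrt (2 * Real.pi))⁻¹ * Real.exp (2⁻¹) * Real.exp u := by
        rw [MeasureTheory.integral_const_mul, integral_exp_Iic]

lemma tendsto_stdPdf_atBot : Tendsto stdPdf atBot (nhds 0) := by
  unfold stdPdf
  rw [show (0:ℝ) = (Real.sqrt (2 * Real.pi))⁻¹ * 0 by ring]
  refine Tendsto.const_mul _ ?_
  refine Real.tendsto_exp_atBot.comp ?_
  have h : Tendsto (fun x : ℝ => x ^ 2) atBot atTop := by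
    refine tendsto_atTop_mono' atBot ?_ tendsto_neg_atBot_atTop
    filter_upwards [eventually_le_atBot (-1 : ℝ)] with x hx
    nlinarith
  have h2 : Tendsto (fun x : ℝ => -(x ^ 2) / 2) atBot atBot := by
    apply Filter.Tendsto.atBot_div_const (by norm_num)
    exact tendsto_neg_atTop_atBot.comp h
  exact h2

lemma tendsto_mul_stdCdf_atBot : Tendsto (fun u : ℝ => u * stdCdf u) atBot (nhds 0) := by
  set K : ℝ := (Real.sqrt (2 * Real.pi))⁻¹ * Real.exp (2⁻¹) with hK
  have hlow : Tendsto (fun u : ℝ => K * (u * Real.exp u)) atBot (nhds 0) := by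
    rw [show (0:ℝ) = K * 0 by ring]
    refine Tendsto.const_mul _ ?_
    have h1 : Tendsto (fun x : ℝ => x ^ 1 * Real.exp (-x)) atTop (nhds 0) :=
      Real.tendsto_pow_mul_exp_neg_atTop_nhds_zero 1
    have h2 : Tendsto (fun u : ℝ => -(((-u) ^ 1) * Real.exp (-(-u)))) atBot (nhds (-0)) :=
      (h1.comp tendsto_neg_atBot_atTop).neg
    simp only [pow_one, neg_neg, neg_zero] at h2
    refine h2.congr (fun u => by ring)
  refine tendsto_of_tendsto_of_tendsto_of_le_of_le' hlow tendsto_const_nhds ?_ ?_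
  · filter_upwards [eventually_le_atBot (0 : ℝ)] with u hu
    have h3 := stdCdf_le_exp u
    rw [← hK] at h3
    nlinarith [mul_nonneg (neg_nonneg.mpr hu) (sub_nonneg.mpr h3)]
  · filter_upwards [eventually_le_atBot (0 : ℝ)] with u hu
    have h4 := stdCdf_nonneg u
    nlinarith [mul_nonneg (neg_nonneg.mpr hu) h4]

lemma mills (u : ℝ) : 0 ≤ stdPdf u + u * stdCdf u := by
  set F : ℝ → ℝ := fun u => stdPdf u + u * stdCdf u with hF
  have hd : ∀ x, HasDerivAt F (stdCdf x) x := by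
    intro x
    have h1 := (hasDerivAt_stdPdf x).add (((hasDerivAt_id x).mul (hasDerivAt_stdCdf x)))
    exact h1.congr_deriv (by simp only [id_eq]; ring)
  have hmono : Monotone F :=
    monotone_of_deriv_nonneg (fun x => (hd x).differentiableAt)
      (fun x => by rw [(hd x).deriv]; exact stdCdf_nonneg x)
  have hlim : Tendsto F atBot (nhds 0) := by
    rw [show (0:ℝ) = 0 + 0 by ring]
    exact tendsto_stdPdf_atBot.add tendsto_mul_stdCdf_atBot
  refine le_of_tendsto hlim ?_
  filter_upwards [eventually_le_atBot u] with t ht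
  exact hmono ht

/-- cdf/pdf + id is monotone -/
lemma psi_mono : Monotone (fun u => stdCdf u / stdPdf u + u) := by
  have hd : ∀ x, HasDerivAt (fun u => stdCdf u / stdPdf u + u)
      ((stdPdf x * stdPdf x - stdCdf x * (-x * stdPdf x)) / (stdPdf x) ^ 2 + 1) x := by
    intro x
    exact ((hasDerivAt_stdCdf x).div (hasDerivAt_stdPdf x) (stdPdf_pos x).ne').add
      (hasDerivAt_id x)
  refine monotone_of_deriv_nonneg (fun x => (hd x).differentiableAt) (fun x => ?_)
  rw [(hd x).deriv]
  have h1 : (stdPdf x * stdPdf x - stdCdf x * (-x * stdPdf x)) / (stdPdf x) ^ 2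
      = (stdPdf x + x * stdCdf x) / stdPdf x := by
    rw [show stdPdf x * stdPdf x - stdCdf x * (-x * stdPdf x)
      = (stdPdf x + x * stdCdf x) * stdPdf x by ring, sq]
    rw [mul_div_mul_right _ _ (stdPdf_pos x).ne']
  rw [h1]
  have := div_nonneg (mills x) (stdPdf_nonneg x)
  linarith

/-- the key price comparison -/
lemma price_step (θ σ p c : ℝ) (hσ : 0 < σ) (hp : 0 < p)
    (hopt : p * stdPdf ((θ - p) / σ) = σ * stdCdf ((θ - p) / σ)) (hcp : c ≤ p) :
    c * stdCdf ((θ - c) / σ) ≤ p * stdCdf ((θ - p) / σ) := by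
  set f : ℝ → ℝ := fun s => s * stdCdf ((θ - s) / σ) with hf
  have hd : ∀ s, HasDerivAt f
      (1 * stdCdf ((θ - s)/σ) + s * (stdPdf ((θ - s)/σ) * (-1/σ))) s := by
    intro s
    have hinner : HasDerivAt (fun s : ℝ => (θ - s) / σ) (-1/σ) s := by
      have := ((hasDerivAt_id s).const_sub θ).div_const σ
      simpa using this
    have houter : HasDerivAt (fun s : ℝ => stdCdf ((θ - s)/σ))
        (stdPdf ((θ - s)/σ) * (-1/σ)) s :=
      by have := (hasDerivAt_stdCdf ((θ - s)/σ)).comp s hinner; exact this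
    exact (hasDerivAt_id s).mul houter
  have hsign : ∀ s ∈ interior (Iic p), 0 ≤ deriv f s := by
    intro s hs
    rw [interior_Iic, mem_Iio] at hs
    rw [(hd s).deriv]
    set u : ℝ := (θ - s) / σ with hu
    set w : ℝ := (θ - p) / σ with hw
    have huw : w ≤ u := by
      rw [hu, hw]
      apply div_le_div_of_nonneg_right ?_ hσ.le
      linarith
    have hpsi : stdCdf w / stdPdf w + w ≤ stdCdf u / stdPdf u + u := psi_mono huw
    have hw2 : stdCdf w / stdPdf w = p / σ := by
      rw [div_eq_div_iff (stdPdf_pos w).ne' hσ.ne']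
      linarith [hopt]
    rw [hw2] at hpsi
    have hsu : s / σ ≤ stdCdf u / stdPdf u := by
      have h1 : p / σ + w - u = s / σ := by
        rw [hu, hw]
        field_simp
        ring
      linarith
    have h2 : s * stdPdf u ≤ stdCdf u * σ := (div_le_div_iff₀ hσ (stdPdf_pos u)).mp hsu
    have hgoal : 1 * stdCdf u + s * (stdPdf u * (-1/σ))
        = (stdCdf u * σ - s * stdPdf u) / σ := by
      field_simp
      ring
    rw [hgoal]
    exact div_nonneg (by linarith) hσ.le
  have hcont : Continuous f :=
    continuous_id.mul (continuous_stdCdf.comp ((continuous_const.sub continuous_id).div_const σ))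
  have hmonoOn := monotoneOn_of_deriv_nonneg (convex_Iic p) hcont.continuousOn
    (fun x _ => (hd x).differentiableAt.differentiableWithinAt) hsign
  exact hmonoOn (mem_Iic.mpr hcp) (mem_Iic.mpr le_rfl) hcp

lemma stdPdf_mul_stdPdf (y z y' z' : ℝ) (h : y^2 + z^2 = y'^2 + z'^2) :
    stdPdf y * stdPdf z = stdPdf y' * stdPdf z' := by
  have e : ∀ a b : ℝ, stdPdf a * stdPdf b
      = ((Real.sqrt (2 * Real.pi))⁻¹)^2 * Real.exp (-(a^2 + b^2)/2) := by
    intro a b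
    unfold stdPdf
    rw [mul_mul_mul_comm, ← Real.exp_add, ← sq]
    congr 1
    ring
  rw [e, e, h]

lemma gauss_factor (σε σθ σ : ℝ) (hσε : 0 < σε) (hσθ : 0 < σθ) (hσpos : 0 < σ)
    (hσ2 : σ ^ 2 = σε ^ 2 + σθ ^ 2) (θ x v : ℝ) :
    stdPdf ((x - v) / σε) / σε * (stdPdf ((v - θ) / σθ) / σθ)
      = stdPdf ((x - θ) / σ) / σ *
        (stdPdf ((v - (σθ ^ 2 / (σε ^ 2 + σθ ^ 2) * x +
          (1 - σθ ^ 2 / (σε ^ 2 + σθ ^ 2)) * θ)) / (σε * σθ / σ)) / (σε * σθ / σ)) := by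
  have hsv : 0 < σε * σθ / σ := by positivity
  have harg : ((x - v) / σε)^2 + ((v - θ) / σθ)^2
      = ((x - θ) / σ)^2 + ((v - (σθ ^ 2 / (σε ^ 2 + σθ ^ 2) * x +
          (1 - σθ ^ 2 / (σε ^ 2 + σθ ^ 2)) * θ)) / (σε * σθ / σ))^2 := by
    rw [div_pow, div_pow, div_pow, div_pow, div_pow, mul_pow, hσ2]
    have h1 : σε ^ 2 + σθ ^ 2 ≠ 0 := by positivity
    field_simp
    ring
  rw [div_mul_div_comm, div_mul_div_comm, stdPdf_mul_stdPdf _ _ _ _ harg]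
  congr 1
  field_simp

section main
variable {θ σε σθ σ p : ℝ} {r : ℝ → ℝ}

lemma postReward_eq (hσε : 0 < σε) (hσθ : 0 < σθ) (hσ : σ = Real.sqrt (σε ^ 2 + σθ ^ 2))
    (r : ℝ → ℝ) (x : ℝ) :
    postReward θ σε σθ r x = ∫ v, r v *
      (stdPdf ((v - (σθ ^ 2 / (σε ^ 2 + σθ ^ 2) * x +
        (1 - σθ ^ 2 / (σε ^ 2 + σθ ^ 2)) * θ)) / (σε * σθ / σ)) / (σε * σθ / σ)) := by
  unfold postReward
  rw [← hσ]
  simp_rw [mul_div_assoc]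

lemma norm_r_le (hmeas : Measurable r) (hrange : ∀ v, r v ∈ Set.Icc 0 p) :
    ∀ v, ‖r v‖ ≤ p := by
  intro v
  rw [Real.norm_eq_abs, abs_of_nonneg (hrange v).1]
  exact (hrange v).2

lemma integrable_r_pdfS (hmeas : Measurable r) (hrange : ∀ v, r v ∈ Set.Icc 0 p)
    (m s : ℝ) (hs : 0 < s) :
    Integrable (fun v => r v * (stdPdf ((v - m) / s) / s)) :=
  (integrable_pdfS m s hs).bdd_mul hmeas.aestronglyMeasurable (Filter.Eventually.of_forall (norm_r_le hmeas hrange))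

lemma postReward_sub (hσε : 0 < σε) (hσθ : 0 < σθ) (hσ : σ = Real.sqrt (σε ^ 2 + σθ ^ 2))
    (hmeas : Measurable r) (hrange : ∀ v, r v ∈ Set.Icc 0 p) (x : ℝ) :
    postReward θ σε σθ r x = ∫ t, r ((σθ ^ 2 / (σε ^ 2 + σθ ^ 2) * x +
      (1 - σθ ^ 2 / (σε ^ 2 + σθ ^ 2)) * θ) + (σε * σθ / σ) * t) * stdPdf t := by
  have hσpos : 0 < σ := by rw [hσ]; positivity
  have hsv : 0 < σε * σθ / σ := by positivity
  rw [postReward_eq hσε hσθ hσ r x]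
  exact integral_comp_affine r _ _ hsv

lemma postReward_mono (hσε : 0 < σε) (hσθ : 0 < σθ) (hσ : σ = Real.sqrt (σε ^ 2 + σθ ^ 2))
    (hmeas : Measurable r) (hrange : ∀ v, r v ∈ Set.Icc 0 p) (hmono : Monotone r) :
    Monotone (fun x => postReward θ σε σθ r x) := by
  have hσpos : 0 < σ := by rw [hσ]; positivity
  have hsv : 0 < σε * σθ / σ := by positivity
  have hτ : 0 < σθ ^ 2 / (σε ^ 2 + σθ ^ 2) := by positivity
  intro a b hab
  simp only
  rw [postReward_sub hσε hσθ hσ hmeas hrange a, postReward_sub hσε hσθ hσ hmeas hrange b]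
  have hint : ∀ y : ℝ, Integrable (fun t => r ((σθ ^ 2 / (σε ^ 2 + σθ ^ 2) * y +
      (1 - σθ ^ 2 / (σε ^ 2 + σθ ^ 2)) * θ) + (σε * σθ / σ) * t) * stdPdf t) := by
    intro y
    refine integrable_stdPdf.bdd_mul ?_ (Filter.Eventually.of_forall (fun t => norm_r_le hmeas hrange _))
    exact (hmeas.comp (measurable_const.add (measurable_id.const_mul _))).aestronglyMeasurable
  refine MeasureTheory.integral_mono (hint a) (hint b) (fun t => ?_)
  have harg : (σθ ^ 2 / (σε ^ 2 + σθ ^ 2) * a + (1 - σθ ^ 2 / (σε ^ 2 + σθ ^ 2)) * θ)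
      + (σε * σθ / σ) * t ≤ (σθ ^ 2 / (σε ^ 2 + σθ ^ 2) * b +
      (1 - σθ ^ 2 / (σε ^ 2 + σθ ^ 2)) * θ) + (σε * σθ / σ) * t := by
    have := mul_le_mul_of_nonneg_left hab hτ.le
    linarith
  exact mul_le_mul_of_nonneg_right (hmono harg) (stdPdf_nonneg t)

lemma postReward_nonneg (hσε : 0 < σε) (hσθ : 0 < σθ) (hσ : σ = Real.sqrt (σε ^ 2 + σθ ^ 2))
    (hrange : ∀ v, r v ∈ Set.Icc 0 p) (x : ℝ) :
    0 ≤ postReward θ σε σθ r x := by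
  have hσpos : 0 < σ := by rw [hσ]; positivity
  have hsv : 0 < σε * σθ / σ := by positivity
  rw [postReward_eq hσε hσθ hσ r x]
  refine MeasureTheory.integral_nonneg (fun v => ?_)
  exact mul_nonneg (hrange v).1 (div_nonneg (stdPdf_nonneg _) hsv.le)

lemma postReward_le (hσε : 0 < σε) (hσθ : 0 < σθ) (hσ : σ = Real.sqrt (σε ^ 2 + σθ ^ 2))
    (hp : 0 ≤ p) (hmeas : Measurable r) (hrange : ∀ v, r v ∈ Set.Icc 0 p) (x : ℝ) :
    postReward θ σε σθ r x ≤ p := by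
  have hσpos : 0 < σ := by rw [hσ]; positivity
  have hsv : 0 < σε * σθ / σ := by positivity
  rw [postReward_eq hσε hσθ hσ r x]
  calc ∫ v, r v * (stdPdf ((v - (σθ ^ 2 / (σε ^ 2 + σθ ^ 2) * x +
        (1 - σθ ^ 2 / (σε ^ 2 + σθ ^ 2)) * θ)) / (σε * σθ / σ)) / (σε * σθ / σ))
      ≤ ∫ v, p * (stdPdf ((v - (σθ ^ 2 / (σε ^ 2 + σθ ^ 2) * x +
        (1 - σθ ^ 2 / (σε ^ 2 + σθ ^ 2)) * θ)) / (σε * σθ / σ)) / (σε * σθ / σ)) := by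
        refine MeasureTheory.integral_mono (integrable_r_pdfS hmeas hrange _ _ hsv)
          (((integrable_pdfS _ _ hsv).const_mul p)) (fun v => ?_)
        exact mul_le_mul_of_nonneg_right (hrange v).2
          (div_nonneg (stdPdf_nonneg _) hsv.le)
    _ = p := by rw [MeasureTheory.integral_const_mul, integral_pdfS _ _ hsv, mul_one]

lemma profit_eq (hσε : 0 < σε) (hσθ : 0 < σθ) (hσ : σ = Real.sqrt (σε ^ 2 + σθ ^ 2))
    (hp : 0 ≤ p) (hmeas : Measurable r) (hrange : ∀ v, r v ∈ Set.Icc 0 p) (c : ℝ) :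
    profit θ σε σθ p r c
      = ∫ x in Ici c, (p - postReward θ σε σθ r x) * (stdPdf ((x - θ) / σ) / σ) := by
  have hσpos : 0 < σ := by rw [hσ]; positivity
  have hσ2 : σ ^ 2 = σε ^ 2 + σθ ^ 2 := by rw [hσ]; exact Real.sq_sqrt (by positivity)
  have hsv : 0 < σε * σθ / σ := by positivity
  set C : ℝ → ℝ := fun v => (p - r v) * (stdPdf ((v - θ) / σθ) / σθ) with hC
  have hCnonneg : ∀ v, 0 ≤ C v := fun v =>
    mul_nonneg (by linarith [(hrange v).2]) (div_nonneg (stdPdf_nonneg _) hσθ.le)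
  have hCle : ∀ v, C v ≤ p * (stdPdf ((v - θ) / σθ) / σθ) := fun v =>
    mul_le_mul_of_nonneg_right (by linarith [(hrange v).1])
      (div_nonneg (stdPdf_nonneg _) hσθ.le)
  have hCmeas : Measurable C :=
    (measurable_const.sub hmeas).mul
      (((continuous_stdPdf.comp ((continuous_id.sub continuous_const).div_const σθ)).measurable).div_const σθ)
  -- step 1 : rewrite profit as iterated integral
  have step1 : profit θ σε σθ p r c
      = ∫ v, ∫ x in Ici c, C v * (stdPdf ((x - v) / σε) / σε) := by
    unfold profit
    refine MeasureTheory.integral_congr_ae (Filter.Eventually.of_forall (fun v => ?_))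
    dsimp only
    rw [MeasureTheory.integral_const_mul, setIntegral_pdfS v σε hσε c]
    have hev : stdPdf ((θ - v) / σθ) = stdPdf ((v - θ) / σθ) := by
      rw [← stdPdf_even ((v - θ) / σθ)]
      congr 1
      ring
    rw [hC, hev]
    ring
  -- step 2 : integrability on the product space, then swap
  have hFmeas : Measurable (Function.uncurry
      (fun v x : ℝ => C v * (stdPdf ((x - v) / σε) / σε))) := by
    refine (hCmeas.comp measurable_fst).mul ?_
    exact ((continuous_stdPdf.comp
      ((continuous_snd.sub continuous_fst).div_const σε)).measurable).div_const σε
  have hker_nonneg : ∀ v x : ℝ, 0 ≤ C v * (stdPdf ((x - v) / σε) / σε) := fun v x =>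
    mul_nonneg (hCnonneg v) (div_nonneg (stdPdf_nonneg _) hσε.le)
  have hnormint : ∀ v : ℝ, (∫ x in Ici c, ‖C v * (stdPdf ((x - v) / σε) / σε)‖)
      = C v * stdCdf ((v - c) / σε) := by
    intro v
    have h1 : ∀ x : ℝ, ‖C v * (stdPdf ((x - v) / σε) / σε)‖
        = C v * (stdPdf ((x - v) / σε) / σε) := fun x => Real.norm_of_nonneg (hker_nonneg v x)
    simp_rw [h1]
    rw [MeasureTheory.integral_const_mul, setIntegral_pdfS v σε hσε c]
  have hint2 : Integrable (fun v => C v * stdCdf ((v - c) / σε)) := by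
    refine MeasureTheory.Integrable.mono'
      ((integrable_pdfS θ σθ hσθ).const_mul p)
      ((hCmeas.mul (measurable_stdCdf.comp ((measurable_id.sub_const c).div_const σε))).aestronglyMeasurable)
      (Filter.Eventually.of_forall (fun v => ?_))
    rw [Real.norm_of_nonneg (mul_nonneg (hCnonneg v) (stdCdf_nonneg _))]
    calc C v * stdCdf ((v - c) / σε) ≤ C v * 1 :=
          mul_le_mul_of_nonneg_left (stdCdf_le_one _) (hCnonneg v)
      _ = C v := mul_one _
      _ ≤ p * (stdPdf ((v - θ) / σθ) / σθ) := hCle v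
  have hprod : Integrable (Function.uncurry
      (fun v x : ℝ => C v * (stdPdf ((x - v) / σε) / σε)))
      (volume.prod (volume.restrict (Ici c))) := by
    refine (MeasureTheory.integrable_prod_iff hFmeas.aestronglyMeasurable).mpr ⟨?_, ?_⟩
    · refine Filter.Eventually.of_forall (fun v => ?_)
      exact ((integrable_pdfS v σε hσε).restrict).const_mul (C v)
    · refine hint2.congr (Filter.Eventually.of_forall (fun v => ?_))
      exact (hnormint v).symm
  have step2 : (∫ v, ∫ x in Ici c, C v * (stdPdf ((x - v) / σε) / σε))
      = ∫ x in Ici c, ∫ v, C v * (stdPdf ((x - v) / σε) / σε) :=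
    MeasureTheory.integral_integral_swap hprod
  -- step 3 : inner integral via the factorization
  have step3 : ∀ x : ℝ, (∫ v, C v * (stdPdf ((x - v) / σε) / σε))
      = (p - postReward θ σε σθ r x) * (stdPdf ((x - θ) / σ) / σ) := by
    intro x
    have hpt : ∀ v : ℝ, C v * (stdPdf ((x - v) / σε) / σε)
        = ((p - r v) * (stdPdf ((v - (σθ ^ 2 / (σε ^ 2 + σθ ^ 2) * x +
            (1 - σθ ^ 2 / (σε ^ 2 + σθ ^ 2)) * θ)) / (σε * σθ / σ)) / (σε * σθ / σ)))
          * (stdPdf ((x - θ) / σ) / σ) := by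
      intro v
      have hfac := gauss_factor σε σθ σ hσε hσθ hσpos hσ2 θ x v
      calc C v * (stdPdf ((x - v) / σε) / σε)
          = (p - r v) * (stdPdf ((x - v) / σε) / σε * (stdPdf ((v - θ) / σθ) / σθ)) := by
            rw [hC]; ring
        _ = (p - r v) * (stdPdf ((x - θ) / σ) / σ *
            (stdPdf ((v - (σθ ^ 2 / (σε ^ 2 + σθ ^ 2) * x +
              (1 - σθ ^ 2 / (σε ^ 2 + σθ ^ 2)) * θ)) / (σε * σθ / σ)) / (σε * σθ / σ))) := by
            rw [hfac]
        _ = _ := by ring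
    simp_rw [hpt]
    rw [MeasureTheory.integral_mul_const]
    congr 1
    have hsplit : (∫ v, (p - r v) * (stdPdf ((v - (σθ ^ 2 / (σε ^ 2 + σθ ^ 2) * x +
        (1 - σθ ^ 2 / (σε ^ 2 + σθ ^ 2)) * θ)) / (σε * σθ / σ)) / (σε * σθ / σ)))
        = (∫ v, p * (stdPdf ((v - (σθ ^ 2 / (σε ^ 2 + σθ ^ 2) * x +
          (1 - σθ ^ 2 / (σε ^ 2 + σθ ^ 2)) * θ)) / (σε * σθ / σ)) / (σε * σθ / σ)))
        - ∫ v, r v * (stdPdf ((v - (σθ ^ 2 / (σε ^ 2 + σθ ^ 2) * x +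
          (1 - σθ ^ 2 / (σε ^ 2 + σθ ^ 2)) * θ)) / (σε * σθ / σ)) / (σε * σθ / σ)) := by
      rw [← MeasureTheory.integral_sub ((integrable_pdfS _ _ hsv).const_mul p)
        (integrable_r_pdfS hmeas hrange _ _ hsv)]
      congr 1
      funext v
      ring
    rw [hsplit, MeasureTheory.integral_const_mul, integral_pdfS _ _ hsv, mul_one,
      postReward_eq hσε hσθ hσ r x]
  rw [step1, step2]
  exact MeasureTheory.setIntegral_congr_fun measurableSet_Ici (fun x _ => step3 x)

end main

/-- no increasing reward program is profitable when the price `p` is optimally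
    set for the no-reward case. -/
theorem stmt_1 (θ σε σθ : ℝ) (hσε : 0 < σε) (hσθ : 0 < σθ)
    (σ : ℝ) (hσ : σ = Real.sqrt (σε ^ 2 + σθ ^ 2))
    (p : ℝ) (hp : 0 < p)
    (hopt : p * stdPdf ((θ - p) / σ) = σ * stdCdf ((θ - p) / σ))
    (r : ℝ → ℝ) (hmeas : Measurable r) (hrange : ∀ v, r v ∈ Set.Icc 0 p)
    (hmono : Monotone r)
    (c : ℝ) (hind : c + postReward θ σε σθ r c = p) :
    profit θ σε σθ p r c ≤ p * stdCdf ((θ - p) / σ) := by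
  have hσpos : 0 < σ := by rw [hσ]; positivity
  have hRc_nonneg := postReward_nonneg (θ := θ) hσε hσθ hσ hrange c
  have hcp : c ≤ p := by linarith
  have hRmono := postReward_mono (θ := θ) hσε hσθ hσ hmeas hrange hmono
  have hRle := postReward_le (θ := θ) hσε hσθ hσ hp.le hmeas hrange
  have hRnn := postReward_nonneg (θ := θ) (r := r) hσε hσθ hσ hrange
  rw [profit_eq hσε hσθ hσ hp.le hmeas hrange c]
  have hpdf_nonneg : ∀ x : ℝ, 0 ≤ stdPdf ((x - θ) / σ) / σ :=
    fun x => div_nonneg (stdPdf_nonneg _) hσpos.le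
  have hbound : (∫ x in Ici c, (p - postReward θ σε σθ r x) * (stdPdf ((x - θ) / σ) / σ))
      ≤ ∫ x in Ici c, c * (stdPdf ((x - θ) / σ) / σ) := by
    refine MeasureTheory.setIntegral_mono_on ?_ ?_ measurableSet_Ici (fun x hx => ?_)
    · refine MeasureTheory.Integrable.mono'
        (((integrable_pdfS θ σ hσpos).const_mul p).restrict) ?_
        (Filter.Eventually.of_forall (fun x => ?_))
      · exact ((measurable_const.sub hRmono.measurable).mul
          ((continuous_stdPdf.comp
            ((continuous_id.sub continuous_const).div_const σ)).measurable.div_const σ)).aestronglyMeasurable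
      · rw [Real.norm_eq_abs, abs_mul, abs_of_nonneg (hpdf_nonneg x)]
        refine mul_le_mul_of_nonneg_right ?_ (hpdf_nonneg x)
        rw [abs_le]
        constructor
        · linarith [hRle x]
        · linarith [hRnn x]
    · exact ((integrable_pdfS θ σ hσpos).const_mul c).restrict
    · have hRx : postReward θ σε σθ r c ≤ postReward θ σε σθ r x := hRmono hx
      refine mul_le_mul_of_nonneg_right ?_ (hpdf_nonneg x)
      linarith
  calc (∫ x in Ici c, (p - postReward θ σε σθ r x) * (stdPdf ((x - θ) / σ) / σ))
      ≤ ∫ x in Ici c, c * (stdPdf ((x - θ) / σ) / σ) := hbound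
    _ = c * stdCdf ((θ - c) / σ) := by
        rw [MeasureTheory.integral_const_mul, setIntegral_pdfS θ σ hσpos c]
    _ ≤ p * stdCdf ((θ - p) / σ) := price_step θ σ p c hσpos hp hopt hcp
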